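/- arXiv:1501.07124 — 2 statements merged into one kernel-verified Lean document; each statement's English description precedes it below -/
import Mathlib

section
/- Let β < 0, B, x₀ ∈ ℝ, s > 0, Σ₂ > 0. The function γ₃(t) = 2(−B + e^{βt}x₀β + e^{βt}B)/(−Σ₂ + 2e^{2βt}βs² + e^{2βt}Σ₂) satisfies the linear ODE γ₃'(t) = 2Σ₂γ₃(t)γ₆(t) − 2Bγ₆(t) − βγ₃(t) with γ₃(0) = x₀/s², where γ₆(t) = −β/((2βs² + Σ₂)e^{2βt} − Σ₂). -/
/-!
Both γ₃ and γ₆ are quotients by D(t) = (2βs² + S₂)e^{2βt} − S₂, which is negative for t ≥ 0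
because e^{2βt} ≤ 1 there. With D ≠ 0 the quotient rule applies, and the ODE becomes a polynomial
identity in e^{βt}.
-/

open Real

theorem exp_two_mul_mul_eq_sq (β t : ℝ) : exp (2 * β * t) = exp (β * t) ^ 2 := by
  rw [← exp_nat_mul]; ring_nf

theorem hasDerivAt_exp_mul (k t : ℝ) : HasDerivAt (fun t => exp (k * t)) (k * exp (k * t)) t := by
  simpa [mul_comm] using ((hasDerivAt_id t).const_mul k).exp

theorem riccati_denom_neg {β s S₂ t : ℝ} (hβ : β < 0) (hs : 0 < s) (hS : 0 ≤ S₂) (ht : 0 ≤ t) :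
    (2 * β * s ^ 2 + S₂) * exp (2 * β * t) - S₂ < 0 := by
  have hE : exp (2 * β * t) ≤ 1 := exp_le_one_iff.mpr (by nlinarith)
  have : 2 * β * s ^ 2 * exp (2 * β * t) < 0 :=
    mul_neg_of_neg_of_pos (by nlinarith [pow_pos hs 2]) (exp_pos _)
  nlinarith

theorem hasDerivAt_affine_exp_div (β p q r w t : ℝ) (h : r * exp (2 * β * t) - w ≠ 0) :
    HasDerivAt (fun t => (p + q * exp (β * t)) / (r * exp (2 * β * t) - w))
      ((q * (β * exp (β * t)) * (r * exp (2 * β * t) - w)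
          - (p + q * exp (β * t)) * (r * (2 * β * exp (2 * β * t))))
        / (r * exp (2 * β * t) - w) ^ 2) t :=
  (((hasDerivAt_exp_mul β t).const_mul q).const_add p).div
    (((hasDerivAt_exp_mul (2 * β) t).const_mul r).sub_const w) h

/-- The function `γ₃(t)` solves the linear ODE
`γ₃' = 2S₂γ₃γ₆ − 2Bγ₆ − βγ₃` with `γ₃(0) = x₀/s²`, where `γ₆` solves the Riccati equation. -/
theorem stmt_4 (β B x₀ s S₂ : ℝ) (hβ : β < 0) (hs : 0 < s) (hS : 0 < S₂) :
    let γ₆ : ℝ → ℝ := fun t => -β / ((2*β*s^2 + S₂) * Real.exp (2*β*t) - S₂)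
    let γ₃ : ℝ → ℝ := fun t =>
      2 * (-B + Real.exp (β*t) * x₀ * β + Real.exp (β*t) * B) /
        (-S₂ + 2 * Real.exp (2*β*t) * β * s^2 + Real.exp (2*β*t) * S₂)
    (∀ t : ℝ, 0 ≤ t →
      HasDerivAt γ₃ (2*S₂*(γ₃ t)*(γ₆ t) - 2*B*(γ₆ t) - β*(γ₃ t)) t) ∧
    γ₃ 0 = x₀ / s^2 := by
  intro γ₆ γ₃
  have hγ₃ : γ₃ = fun t => (-2 * B + 2 * (x₀ * β + B) * exp (β * t)) /
      ((2 * β * s ^ 2 + S₂) * exp (2 * β * t) - S₂) := by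
    funext t; simp only [γ₃]; congr 1 <;> ring
  refine ⟨fun t ht => ?_, ?_⟩
  · have hD := (riccati_denom_neg hβ hs hS.le ht).ne
    rw [hγ₃]
    convert hasDerivAt_affine_exp_div β (-2 * B) (2 * (x₀ * β + B)) _ S₂ t hD using 1
    simp only [γ₆]
    rw [exp_two_mul_mul_eq_sq] at *
    field_simp
    ring
  · have := hβ.ne
    have := hs.ne'
    simp only [γ₃, mul_zero, exp_zero]
    field_simp
    ring
end

section
/- Let β < 0 and let Σ₁, Σ₂ > 0, Σ₃ ∈ ℝ satisfy Σ₃² ≤ Σ₁Σ₂, and let α ∈ ℝ. Then for all t > 0 the quantity v̄(t) = −(1/(2β³))[Σ₂α²e^{−2βt} − 4(Σ₂α² − αβΣ₃)e^{−βt} − 2β³Σ₁t − α²Σ₂(2βt − 3) − 4αβΣ₃(1 − βt)] is nonnegative, and it is strictly positive for t > 0 when Σ₁ > 0. -/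
private lemma aux_g (x : ℝ) (hx : 0 < x) : 0 < (x-1)*Real.exp x + 1 := by
  have h := Real.add_one_lt_exp (x := -x) (by linarith)
  have he : Real.exp (-x) * Real.exp x = 1 := by
    rw [← Real.exp_add]; simp
  nlinarith [Real.exp_pos x]

private lemma aux_D1 (s : ℝ) (hs : 0 < s) :
    0 < (2*s-3)*(Real.exp s)^2 + 4*Real.exp s - 1 := by
  have key : StrictMonoOn (fun x : ℝ => (2*x-3)*(Real.exp x)^2 + 4*Real.exp x - 1)
      (Set.Ici 0) := by
    apply strictMonoOn_of_deriv_pos (convex_Ici 0)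
    · fun_prop
    · intro x hx
      rw [interior_Ici] at hx
      have hexp := Real.hasDerivAt_exp x
      have h1 : HasDerivAt (fun x : ℝ => (Real.exp x)^2)
          ((2:ℕ) * (Real.exp x)^(2-1) * Real.exp x) x := hexp.pow 2
      have h2 : HasDerivAt (fun x : ℝ => 2*x-3) 2 x := by
        simpa using ((hasDerivAt_id x).const_mul (2:ℝ)).sub_const 3
      have hd : HasDerivAt (fun x : ℝ => (2*x-3)*(Real.exp x)^2 + 4*Real.exp x - 1)
          ((4*x-4)*(Real.exp x)^2 + 4*Real.exp x) x := by
        have := ((h2.mul h1).add (hexp.const_mul 4)).sub_const 1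
        refine this.congr_deriv ?_
        push_cast
        ring
      rw [hd.deriv]
      have hg := aux_g x hx
      nlinarith [Real.exp_pos x]
  have h0 := key (Set.mem_Ici.mpr le_rfl) (Set.mem_Ici.mpr hs.le) hs
  simp only [Real.exp_zero] at h0
  nlinarith [h0]

private lemma aux_D (s : ℝ) (hs : 0 < s) :
    0 < (s-2)*(Real.exp s)^2 + 4*Real.exp s - s - 2 := by
  have key : StrictMonoOn (fun x : ℝ => (x-2)*(Real.exp x)^2 + 4*Real.exp x - x - 2)
      (Set.Ici 0) := by
    apply strictMonoOn_of_deriv_pos (convex_Ici 0)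
    · fun_prop
    · intro x hx
      rw [interior_Ici] at hx
      have hexp := Real.hasDerivAt_exp x
      have h1 : HasDerivAt (fun x : ℝ => (Real.exp x)^2)
          ((2:ℕ) * (Real.exp x)^(2-1) * Real.exp x) x := hexp.pow 2
      have h2 : HasDerivAt (fun x : ℝ => x-2) 1 x := by
        simpa using (hasDerivAt_id x).sub_const 2
      have hd : HasDerivAt (fun x : ℝ => (x-2)*(Real.exp x)^2 + 4*Real.exp x - x - 2)
          ((2*x-3)*(Real.exp x)^2 + 4*Real.exp x - 1) x := by
        have := (((h2.mul h1).add (hexp.const_mul 4)).sub (hasDerivAt_id x)).sub_const 2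
        refine this.congr_deriv ?_
        push_cast
        ring
      rw [hd.deriv]
      exact aux_D1 x hx
  have h0 := key (Set.mem_Ici.mpr le_rfl) (Set.mem_Ici.mpr hs.le) hs
  simp only [Real.exp_zero] at h0
  nlinarith [h0]

private lemma aux_key (s : ℝ) (hs : 0 < s) :
    2*(Real.exp s - 1 - s)^2 < ((Real.exp s)^2 - 4*Real.exp s + 3 + 2*s)*s := by
  nlinarith [aux_D s hs]

private lemma aux_alg (β t u α S₁ S₂ S₃ : ℝ) (hβ : β < 0) (ht : 0 < t)
    (hS₁ : 0 < S₁) (hS₂ : 0 < S₂) (hCS : S₃^2 ≤ S₁ * S₂)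
    (hkey : 2*(u - 1 - (-β*t))^2 < (u^2 - 4*u + 3 + 2*(-β*t))*(-β*t)) :
    0 < -(1/(2*β^3)) *
      (S₂*α^2 * u^2 - 4*(S₂*α^2 - α*β*S₃) * u
        - 2*β^3*S₁*t - α^2*S₂*(2*β*t - 3) - 4*α*β*S₃*(1 - β*t)) := by
  have hs : 0 < -β*t := by nlinarith
  set s : ℝ := -β*t with hs_def
  set P : ℝ := u^2 - 4*u + 3 + 2*s with hP_def
  set Q : ℝ := u - 1 - s with hQ_def
  have hP : 0 < P := by nlinarith [sq_nonneg Q]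
  have h1 : 2*S₃^2*Q^2 ≤ 2*S₁*S₂*Q^2 := by nlinarith [sq_nonneg Q]
  have h2 : 2*S₁*S₂*Q^2 < S₁*S₂*(P*s) := by nlinarith [mul_pos hS₁ hS₂]
  have hW : 0 < S₂*α^2*P - 4*α*(-β)*S₃*Q + 2*S₁*(-β)^2*s := by
    have hAW : (S₂*P)*(S₂*α^2*P - 4*α*(-β)*S₃*Q + 2*S₁*(-β)^2*s)
        = (S₂*P*α - 2*(-β)*S₃*Q)^2 + 2*(-β)^2*(S₁*S₂*(P*s) - 2*S₃^2*Q^2) := by ring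
    nlinarith [sq_nonneg (S₂*P*α - 2*(-β)*S₃*Q), mul_pos hS₂ hP,
      mul_pos (mul_pos (neg_pos.mpr hβ) (neg_pos.mpr hβ))
        (by linarith : (0:ℝ) < S₁*S₂*(P*s) - 2*S₃^2*Q^2)]
  have hfac : 0 < -(1/(2*β^3)) :=
    neg_pos.mpr (div_neg_of_pos_of_neg one_pos (by nlinarith [mul_pos (mul_pos (neg_pos.mpr hβ) (neg_pos.mpr hβ)) (neg_pos.mpr hβ)]))
  have hWeq : (S₂*α^2 * u^2 - 4*(S₂*α^2 - α*β*S₃) * u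
        - 2*β^3*S₁*t - α^2*S₂*(2*β*t - 3) - 4*α*β*S₃*(1 - β*t))
      = S₂*α^2*P - 4*α*(-β)*S₃*Q + 2*S₁*(-β)^2*s := by
    rw [hP_def, hQ_def, hs_def]; ring
  rw [hWeq]
  exact mul_pos hfac hW

/-- The conditional variance of the log-capital in the Vasicek model with uniform initial
factor distribution is nonnegative, and strictly positive for `t > 0`. -/
theorem stmt_6 (β α S₁ S₂ S₃ : ℝ) (hβ : β < 0) (hS₁ : 0 < S₁) (hS₂ : 0 < S₂)
    (hCS : S₃^2 ≤ S₁ * S₂) :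
    let v : ℝ → ℝ := fun t => -(1/(2*β^3)) *
      (S₂*α^2 * Real.exp (-2*β*t) - 4*(S₂*α^2 - α*β*S₃) * Real.exp (-β*t)
        - 2*β^3*S₁*t - α^2*S₂*(2*β*t - 3) - 4*α*β*S₃*(1 - β*t))
    (∀ t : ℝ, 0 < t → 0 ≤ v t) ∧ (∀ t : ℝ, 0 < t → 0 < v t) := by
  intro v
  have main : ∀ t : ℝ, 0 < t → 0 < v t := by
    intro t ht
    have hs : 0 < -β*t := by nlinarith
    have hu2 : Real.exp (-2*β*t) = (Real.exp (-β*t))^2 := by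
      rw [show (-2*β*t : ℝ) = (-β*t) + (-β*t) by ring, Real.exp_add]; ring
    have hkey := aux_key (-β*t) hs
    show 0 < -(1/(2*β^3)) *
      (S₂*α^2 * Real.exp (-2*β*t) - 4*(S₂*α^2 - α*β*S₃) * Real.exp (-β*t)
        - 2*β^3*S₁*t - α^2*S₂*(2*β*t - 3) - 4*α*β*S₃*(1 - β*t))
    rw [hu2]
    exact aux_alg β t (Real.exp (-β*t)) α S₁ S₂ S₃ hβ ht hS₁ hS₂ hCS hkey
  exact ⟨fun t ht => (main t ht).le, main⟩
end
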